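/- arXiv:1804.03044 — 3 statements merged into one kernel-verified Lean document; each statement's English description precedes it below -/
import Mathlib

section
/- Let f_τ be the 2π-periodization of F_τ, i.e. f_τ(φ) = Σ_{j∈ℤ} F_τ(φ + 2jπ). Then the k-th Fourier coefficient (f̂_τ)_k = ∫_0^{2π} f_τ(t)e^{-ikt} dt equals 0 when k is even, and equals (2√(2π)/τ)·exp(-k²/(2τ²)) when k is odd. -/
/-!
The coefficient `∫₀^{2π} f_τ(t) e^{-ikt} dt` unfolds, by cutting `ℝ` into the translates
`[2jπ, 2(j+1)π]` and using the `2π`-periodicity of `e^{-ikt}`, into the Fourier integral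
`∫_ℝ F_τ(x) e^{-ikx} dx`; integrability of `F_τ` alone justifies swapping sum and integral.
Since `F_τ = G - G(· - π)` with `G` a Gaussian, this integral is `(1 - e^{-ikπ}) Ĝ(k)
= (1 - (-1)^k) (√(2π)/τ) e^{-k²/(2τ²)}`.
-/

open Real Complex MeasureTheory

/-- `F_τ(φ) = exp(-τ²φ²/2) - exp(-τ²(φ-π)²/2)` as a complex-valued function. -/
noncomputable def Fgauss (τ : ℝ) (φ : ℝ) : ℂ :=
  Complex.exp (-(τ^2 * φ^2 / 2)) - Complex.exp (-(τ^2 * (φ - Real.pi)^2 / 2))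

/-- The 2π-periodization of `F_τ`. -/
noncomputable def fper (τ : ℝ) (φ : ℝ) : ℂ :=
  ∑' j : ℤ, Fgauss τ (φ + 2 * j * Real.pi)

section Periodization

variable {E : Type*} [NormedAddCommGroup E] [NormedSpace ℝ E] {f : ℝ → E} {T : ℝ}

theorem MeasureTheory.Integrable.hasSum_intervalIntegral_comp_add_int_mul (hf : Integrable f)
    (hT : 0 < T) : HasSum (fun n : ℤ => ∫ t in (0 : ℝ)..T, f (t + n * T)) (∫ x, f x) := by
  have h := hasSum_integral_iUnion (f := f) (fun n : ℤ => measurableSet_Ioc)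
    (Set.pairwise_disjoint_Ioc_add_zsmul (0 : ℝ) T)
    (by rw [iUnion_Ioc_add_zsmul hT 0]; exact hf.integrableOn)
  rw [iUnion_Ioc_add_zsmul hT 0, setIntegral_univ] at h
  convert h using 2 with n
  rw [intervalIntegral.integral_comp_add_right, intervalIntegral.integral_of_le (by linarith)]
  simp only [zero_add, zsmul_eq_mul]
  push_cast
  ring_nf

-- The interchange of sum and integral is licensed by the same decomposition applied to `‖f‖`.
theorem MeasureTheory.Integrable.intervalIntegral_tsum_comp_add_int_mul (hf : Integrable f)
    (hT : 0 < T) : ∫ t in (0 : ℝ)..T, ∑' n : ℤ, f (t + n * T) = ∫ x, f x := by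
  have hshift (n : ℤ) : Integrable (fun t => f (t + n * T)) (volume.restrict (Set.Ioc 0 T)) :=
    (hf.comp_add_right _).restrict
  have hnorm := (hf.norm.hasSum_intervalIntegral_comp_add_int_mul hT).summable
  simp only [intervalIntegral.integral_of_le hT.le] at hnorm ⊢
  rw [← integral_tsum_of_summable_integral_norm hshift hnorm]
  simpa only [intervalIntegral.integral_of_le hT.le] using
    (hf.hasSum_intervalIntegral_comp_add_int_mul hT).tsum_eq

end Periodization

lemma periodic_cexp_neg_I_int_mul (k : ℤ) :
    Function.Periodic (fun t : ℝ => cexp (-I * k * t)) (2 * π) := fun t => by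
  simp only
  rw [show -I * k * ((t + 2 * π : ℝ) : ℂ) = -I * k * t + (-k : ℤ) * (2 * π * I) by push_cast; ring,
    Complex.exp_add, Complex.exp_int_mul_two_pi_mul_I, mul_one]

lemma cexp_neg_I_int_mul_pi (k : ℤ) : cexp (-I * k * π) = (-1) ^ k := by
  rw [show -I * k * π = (-k : ℤ) * (π * I) by push_cast; ring, Complex.exp_int_mul,
    Complex.exp_pi_mul_I, zpow_neg, ← inv_zpow, inv_neg, inv_one]

noncomputable def modulatedGaussian (τ ξ x : ℝ) : ℂ :=
  cexp (-(τ ^ 2 * x ^ 2 / 2)) * cexp (-I * ξ * x)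

lemma modulatedGaussian_eq_cexp_quadratic (τ ξ x : ℝ) :
    modulatedGaussian τ ξ x = cexp (-(τ ^ 2 / 2 : ℂ) * x ^ 2 + -I * ξ * x + 0) := by
  rw [modulatedGaussian, ← Complex.exp_add]
  ring_nf

lemma re_sq_div_two_pos {τ : ℝ} (hτ : τ ≠ 0) : 0 < (τ ^ 2 / 2 : ℂ).re := by
  rw [show (τ ^ 2 / 2 : ℂ) = ((τ ^ 2 / 2 : ℝ) : ℂ) by push_cast; ring, ofReal_re]
  positivity

lemma integrable_modulatedGaussian {τ : ℝ} (hτ : τ ≠ 0) (ξ : ℝ) :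
    Integrable (modulatedGaussian τ ξ) := by
  rw [show modulatedGaussian τ ξ = _ from funext (modulatedGaussian_eq_cexp_quadratic τ ξ)]
  exact integrable_cexp_quadratic (re_sq_div_two_pos hτ) (-I * ξ) 0

lemma integral_modulatedGaussian {τ : ℝ} (hτ : 0 < τ) (ξ : ℝ) :
    ∫ x, modulatedGaussian τ ξ x = √(2 * π) / τ * cexp (-(ξ ^ 2 / (2 * τ ^ 2))) := by
  have hb : (-(τ ^ 2 / 2 : ℂ)).re < 0 := by
    simpa only [neg_re, neg_lt_zero] using re_sq_div_two_pos hτ.ne'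
  have hsqrt : ((π : ℂ) / - -(τ ^ 2 / 2 : ℂ)) ^ (1 / 2 : ℂ) = (√(2 * π) / τ : ℝ) := by
    rw [neg_neg, show (π : ℂ) / (τ ^ 2 / 2 : ℂ) = ((2 * π / τ ^ 2 : ℝ) : ℂ) by push_cast; ring,
      show (1 / 2 : ℂ) = ((1 / 2 : ℝ) : ℂ) by norm_num, ← ofReal_cpow (by positivity),
      ← Real.sqrt_eq_rpow, Real.sqrt_div' _ (by positivity), Real.sqrt_sq hτ.le]
  have hτ0 : (τ : ℂ) ≠ 0 := by exact_mod_cast hτ.ne'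
  simp only [modulatedGaussian_eq_cexp_quadratic]
  rw [integral_cexp_quadratic hb, hsqrt, ofReal_div]
  congr 2
  field_simp
  ring_nf
  rw [I_sq]
  ring

lemma Fgauss_mul_cexp (τ : ℝ) (k : ℤ) (x : ℝ) :
    Fgauss τ x * cexp (-I * k * x)
      = modulatedGaussian τ k x - (-1) ^ k * modulatedGaussian τ k (x - π) := by
  rw [← cexp_neg_I_int_mul_pi, modulatedGaussian, modulatedGaussian, Fgauss]
  simp only [sub_mul, ← Complex.exp_add]
  congr 2
  push_cast
  ring

lemma integrable_Fgauss_mul_cexp {τ : ℝ} (hτ : τ ≠ 0) (k : ℤ) :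
    Integrable fun x => Fgauss τ x * cexp (-I * k * x) := by
  have hg := integrable_modulatedGaussian hτ k
  simp only [Fgauss_mul_cexp]
  exact hg.sub ((hg.comp_sub_right π).const_mul _)

lemma integral_Fgauss_mul_cexp {τ : ℝ} (hτ : 0 < τ) (k : ℤ) :
    ∫ x, Fgauss τ x * cexp (-I * k * x)
      = (1 - (-1) ^ k) * (√(2 * π) / τ * cexp (-(k ^ 2 / (2 * τ ^ 2)))) := by
  have hg := integrable_modulatedGaussian hτ.ne' k
  simp only [Fgauss_mul_cexp]
  rw [integral_sub hg ((hg.comp_sub_right π).const_mul _), integral_const_mul,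
    integral_sub_right_eq_self (modulatedGaussian τ k), integral_modulatedGaussian hτ]
  push_cast
  ring

lemma intervalIntegral_tsum_comp_add_mul_cexp {F : ℝ → ℂ} (k : ℤ)
    (hF : Integrable fun x => F x * cexp (-I * k * x)) :
    ∫ t in (0 : ℝ)..2 * π, (∑' j : ℤ, F (t + 2 * j * π)) * cexp (-I * k * t)
      = ∫ x, F x * cexp (-I * k * x) := by
  rw [← hF.intervalIntegral_tsum_comp_add_int_mul two_pi_pos]
  congr 1 with t
  rw [← tsum_mul_right]
  congr 1 with j
  have hper : cexp (-I * k * ↑(t + j * (2 * π))) = cexp (-I * k * t) :=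
    (periodic_cexp_neg_I_int_mul k).int_mul j t
  rw [hper, mul_comm (j : ℝ) (2 * π), mul_right_comm]

theorem stmt_1 (τ : ℝ) (hτ : 1 ≤ τ) (k : ℤ) :
    (Even k →
      (∫ t in (0:ℝ)..(2 * Real.pi), fper τ t * Complex.exp (-Complex.I * k * t)) = 0) ∧
    (Odd k →
      (∫ t in (0:ℝ)..(2 * Real.pi), fper τ t * Complex.exp (-Complex.I * k * t))
        = (2 * Real.sqrt (2 * Real.pi) / τ) * Complex.exp (-(k^2 / (2 * τ^2)))) := by
  have hτ₀ : 0 < τ := by linarith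
  have hcoeff : ∫ t in (0 : ℝ)..2 * π, fper τ t * cexp (-I * k * t)
      = (1 - (-1) ^ k) * (√(2 * π) / τ * cexp (-(k ^ 2 / (2 * τ ^ 2)))) :=
    (intervalIntegral_tsum_comp_add_mul_cexp k (integrable_Fgauss_mul_cexp hτ₀.ne' k)).trans
      (integral_Fgauss_mul_cexp hτ₀ k)
  refine ⟨fun hk => ?_, fun hk => ?_⟩
  · rw [hcoeff, hk.neg_one_zpow, sub_self, zero_mul]
  · rw [hcoeff, hk.neg_one_zpow]
    ring
end

section
/- For all r ∈ (0,1) and ϑ ∈ [0,π], the quantity √(sin ϑ) · |r(10-19r²+r⁴) - (3-14r²+5r⁴)cos ϑ - r(9-r²)cos²ϑ| is bounded above by 21. -/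
open Real

set_option maxHeartbeats 1600000 in
theorem stmt_16 (r ϑ : ℝ) (hr : r ∈ Set.Ioo (0:ℝ) 1) (hϑ : ϑ ∈ Set.Icc 0 Real.pi) :
    Real.sqrt (Real.sin ϑ) *
      |r * (10 - 19 * r ^ 2 + r ^ 4) - (3 - 14 * r ^ 2 + 5 * r ^ 4) * Real.cos ϑ
        - r * (9 - r ^ 2) * Real.cos ϑ ^ 2| ≤ 21 := by
  obtain ⟨hr0, hr1⟩ := hr
  obtain ⟨hϑ0, hϑ1⟩ := hϑ
  have hs : 0 ≤ Real.sin ϑ := Real.sin_nonneg_of_nonneg_of_le_pi hϑ0 hϑ1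
  set c := Real.cos ϑ with hcdef
  have hc1 : -1 ≤ c := Real.neg_one_le_cos ϑ
  have hc2 : c ≤ 1 := Real.cos_le_one ϑ
  set S := Real.sqrt (Real.sin ϑ) with hSdef
  have hS0 : 0 ≤ S := Real.sqrt_nonneg _
  have hS4 : S ^ 4 = 1 - c ^ 2 := by
    have h2 : S ^ 2 = Real.sin ϑ := Real.sq_sqrt hs
    have h3 : Real.sin ϑ ^ 2 + c ^ 2 = 1 := Real.sin_sq_add_cos_sq ϑ
    nlinarith [h2, h3]
  set t := |c| with htdef
  have ht0 : 0 ≤ t := abs_nonneg c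
  have ht1 : t ≤ 1 := abs_le.mpr ⟨hc1, hc2⟩
  have htsq : t ^ 2 = c ^ 2 := sq_abs c
  have hA : |r * (10 - 19 * r ^ 2 + r ^ 4)| ≤ 8 := by
    rw [abs_le]
    constructor
    · nlinarith [mul_pos (sub_pos.mpr hr1)
        (show (0:ℝ) < 8 + 18 * r + 18 * r ^ 2 - r ^ 3 - r ^ 4 by nlinarith [sq_nonneg r, mul_pos hr0 hr0, mul_pos (mul_pos hr0 hr0) hr0]),
        sq_nonneg r]
    · nlinarith [mul_nonneg hr0.le (sq_nonneg (3 * r - 1)), sq_nonneg (2 * r - 1),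
        mul_nonneg (mul_nonneg (mul_nonneg hr0.le hr0.le) hr0.le)
          (mul_nonneg (sub_nonneg.mpr hr1.le) (by linarith : (0:ℝ) ≤ 1 + r))]
  have hB : |3 - 14 * r ^ 2 + 5 * r ^ 4| ≤ 6 := by
    rw [abs_le]
    constructor
    · nlinarith [mul_nonneg (mul_nonneg (sub_nonneg.mpr hr1.le) (by linarith : (0:ℝ) ≤ 1 + r))
        (show (0:ℝ) ≤ 9 - 5 * r ^ 2 by nlinarith)]
    · nlinarith [mul_nonneg (sq_nonneg r)
        (mul_nonneg (sub_nonneg.mpr hr1.le) (by linarith : (0:ℝ) ≤ 1 + r))]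
  have hC : |r * (9 - r ^ 2)| ≤ 8 := by
    rw [abs_le]
    constructor <;> nlinarith [sq_nonneg (r - 1), sq_nonneg (r + 1), mul_pos hr0 hr0,
      mul_nonneg (sub_nonneg.mpr hr1.le) (show (0:ℝ) ≤ 8 - r - r ^ 2 by nlinarith)]
  have hY : |(3 - 14 * r ^ 2 + 5 * r ^ 4) * c| ≤ 6 * t := by
    rw [abs_mul]
    exact mul_le_mul hB le_rfl (abs_nonneg c) (by norm_num)
  have hZ : |r * (9 - r ^ 2) * c ^ 2| ≤ 8 * t ^ 2 := by
    rw [abs_mul, abs_pow, ← htdef]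
    exact mul_le_mul hC le_rfl (by positivity) (by norm_num)
  have hP : |r * (10 - 19 * r ^ 2 + r ^ 4) - (3 - 14 * r ^ 2 + 5 * r ^ 4) * c
      - r * (9 - r ^ 2) * c ^ 2| ≤ 8 + 6 * t + 8 * t ^ 2 := by
    have tri1 := abs_sub (r * (10 - 19 * r ^ 2 + r ^ 4) - (3 - 14 * r ^ 2 + 5 * r ^ 4) * c)
      (r * (9 - r ^ 2) * c ^ 2)
    have tri2 := abs_sub (r * (10 - 19 * r ^ 2 + r ^ 4)) ((3 - 14 * r ^ 2 + 5 * r ^ 4) * c)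
    linarith
  have hX0 : 0 ≤ 8 + 6 * t + 8 * t ^ 2 := by positivity
  have key : S * (8 + 6 * t + 8 * t ^ 2) ≤ 21 := by
    have h4 : (S * (8 + 6 * t + 8 * t ^ 2)) ^ 4 ≤ 21 ^ 4 := by
      have heq : (S * (8 + 6 * t + 8 * t ^ 2)) ^ 4
          = (1 - t ^ 2) * (8 + 6 * t + 8 * t ^ 2) ^ 4 := by
        rw [mul_pow, hS4, htsq]
      rw [heq]
      rcases le_or_gt t (9/10) with h | h
      · have hX : 8 + 6 * t + 8 * t ^ 2 ≤ 21 := by nlinarith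
        have h1 : (8 + 6 * t + 8 * t ^ 2) ^ 4 ≤ 21 ^ 4 := by
          exact pow_le_pow_left₀ hX0 hX 4
        have h2 : 1 - t ^ 2 ≤ 1 := by nlinarith
        nlinarith [pow_nonneg hX0 4]
      · have hX : 8 + 6 * t + 8 * t ^ 2 ≤ 22 := by nlinarith
        have h1 : (8 + 6 * t + 8 * t ^ 2) ^ 4 ≤ 22 ^ 4 := by
          exact pow_le_pow_left₀ hX0 hX 4
        have h2 : 1 - t ^ 2 ≤ 19/100 := by nlinarith
        have h3 : 0 ≤ 1 - t ^ 2 := by nlinarith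
        nlinarith [pow_nonneg hX0 4]
    have := pow_le_pow_iff_left₀ (mul_nonneg hS0 hX0) (by norm_num : (0:ℝ) ≤ 21)
      (by norm_num : 4 ≠ 0)
    exact this.mp h4
  calc S * |r * (10 - 19 * r ^ 2 + r ^ 4) - (3 - 14 * r ^ 2 + 5 * r ^ 4) * c
      - r * (9 - r ^ 2) * c ^ 2|
      ≤ S * (8 + 6 * t + 8 * t ^ 2) := mul_le_mul_of_nonneg_left hP hS0
    _ ≤ 21 := key
end

section
/- For all r ∈ (0,1), ∫_0^π sin¹²ϑ / (1 - 2r cos ϑ + r²)^7 dϑ ≤ 231π/(1024(1-r²)). -/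
/-
With D = 1 - 2 r cos θ + r², the integrand admits a Hermite reduction
  sin¹²θ / D⁷ = d/dθ [sin θ · P(cos θ) / (15360 r¹¹ D⁶)] + a (1 - r²) / D - b,
where a = 231 (1 + r¹²) / (2048 r¹² (1 - r²)) and b = 231 (1 + r² + ⋯ + r¹⁰) / (2048 r¹²).
The rational part vanishes at 0 and π, and the Poisson kernel (1 - r²) / D has the primitive
θ + 2 arctan (r sin θ / (1 - r cos θ)), so the integral equals (a - b) π = 231 π / (1024 (1 - r²)).
-/

open Real Polynomial

lemma mul_cos_le_abs (r θ : ℝ) : r * cos θ ≤ |r| := by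
  calc r * cos θ ≤ |r * cos θ| := le_abs_self _
    _ = |r| * |cos θ| := abs_mul r (cos θ)
    _ ≤ |r| * 1 := by gcongr; exact abs_cos_le_one θ
    _ = |r| := mul_one _

lemma one_sub_mul_cos_pos {r : ℝ} (hr : |r| < 1) (θ : ℝ) : 0 < 1 - r * cos θ := by
  linarith [mul_cos_le_abs r θ]

lemma one_sub_two_mul_mul_cos_add_sq_pos {r : ℝ} (hr : |r| < 1) (θ : ℝ) :
    0 < 1 - 2 * r * cos θ + r ^ 2 := by
  nlinarith [mul_cos_le_abs r θ, sq_abs r, abs_nonneg r]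

lemma hasDerivAt_add_two_mul_arctan {r : ℝ} (hr : |r| < 1) (θ : ℝ) :
    HasDerivAt (fun θ => θ + 2 * arctan (r * sin θ / (1 - r * cos θ)))
      ((1 - r ^ 2) / (1 - 2 * r * cos θ + r ^ 2)) θ := by
  have hw := one_sub_mul_cos_pos hr θ
  have hD := one_sub_two_mul_mul_cos_add_sq_pos hr θ
  have hu := ((hasDerivAt_sin θ).const_mul r).div
    (((hasDerivAt_cos θ).const_mul r).const_sub 1) hw.ne'
  refine ((hasDerivAt_id θ).add (hu.arctan.const_mul 2)).congr_deriv ?_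
  simp only [Pi.div_apply]
  have h : 1 + (r * sin θ / (1 - r * cos θ)) ^ 2
      = (1 - 2 * r * cos θ + r ^ 2) / (1 - r * cos θ) ^ 2 := by
    field_simp
    linear_combination r ^ 2 * sin_sq_add_cos_sq θ
  rw [h]
  field_simp
  linear_combination (-(2 * r ^ 2)) * sin_sq_add_cos_sq θ

lemma hasDerivAt_sin_mul_eval_cos_div_pow (p : ℝ[X]) (r : ℝ) (n : ℕ) {θ : ℝ}
    (hD : 1 - 2 * r * cos θ + r ^ 2 ≠ 0) :
    HasDerivAt (fun θ => sin θ * p.eval (cos θ) / (1 - 2 * r * cos θ + r ^ 2) ^ n)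
      (((cos θ * p.eval (cos θ) - sin θ ^ 2 * p.derivative.eval (cos θ))
          * (1 - 2 * r * cos θ + r ^ 2) - 2 * n * r * sin θ ^ 2 * p.eval (cos θ))
        / (1 - 2 * r * cos θ + r ^ 2) ^ (n + 1)) θ := by
  have hp := (p.hasDerivAt (cos θ)).comp θ (hasDerivAt_cos θ)
  have hD' := ((((hasDerivAt_cos θ).const_mul (2 * r)).const_sub 1).add_const (r ^ 2)).pow n
  refine (((hasDerivAt_sin θ).mul hp).div hD' (pow_ne_zero n hD)).congr_deriv ?_
  simp only [Function.comp, Pi.pow_apply, Pi.mul_apply]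
  generalize 1 - 2 * r * cos θ + r ^ 2 = D at hD ⊢
  rcases n with _ | n
  · field_simp
    ring
  · rw [Nat.add_sub_cancel]
    field_simp
    push_cast
    ring

-- The polynomial `P` of the Hermite reduction, obtained by computer algebra.
noncomputable def primitiveNumerator (r : ℝ) : ℝ[X] :=
  C (-3465 - 23100 * r ^ 2 - 68838 * r ^ 4 - 124476 * r ^ 6 - 161161 * r ^ 8 -
      173056 * r ^ 10 - 161161 * r ^ 12 - 124476 * r ^ 14 - 68838 * r ^ 16 - 23100 * r ^ 18 -
      3465 * r ^ 20)
  + C (38115 * r + 214830 * r ^ 3 + 534996 * r ^ 5 + 813186 * r ^ 7 + 923241 * r ^ 9 +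
      923241 * r ^ 11 + 813186 * r ^ 13 + 534996 * r ^ 15 + 214830 * r ^ 17 + 38115 * r ^ 19) * X
  + C (-170940 * r ^ 2 - 786324 * r ^ 4 - 1579908 * r ^ 6 - 1989548 * r ^ 8 -
      2040128 * r ^ 10 - 1989548 * r ^ 12 - 1579908 * r ^ 14 - 786324 * r ^ 16 -
      170940 * r ^ 18) * X ^ 2
  + C (395010 * r ^ 3 + 1404018 * r ^ 5 + 2170278 * r ^ 7 + 2286438 * r ^ 9 +
      2286438 * r ^ 11 + 2170278 * r ^ 13 + 1404018 * r ^ 15 + 395010 * r ^ 17) * X ^ 3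
  + C (-482328 * r ^ 4 - 1202256 * r ^ 6 - 1354056 * r ^ 8 - 1310976 * r ^ 10 -
      1354056 * r ^ 12 - 1202256 * r ^ 14 - 482328 * r ^ 16) * X ^ 4
  + C (271656 * r ^ 5 + 378576 * r ^ 7 + 330264 * r ^ 9 + 330264 * r ^ 11 + 378576 * r ^ 13 +
      271656 * r ^ 15) * X ^ 5
  + C (-31680 * r ^ 6 - 1760 * r ^ 8 - 28736 * r ^ 10 - 1760 * r ^ 12 - 31680 * r ^ 14) * X ^ 6
  + C (-7920 * r ^ 7 + 6864 * r ^ 9 + 6864 * r ^ 11 - 7920 * r ^ 13) * X ^ 7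
  + C (-3520 * r ^ 8 + 6272 * r ^ 10 - 3520 * r ^ 12) * X ^ 8
  + C (-2112 * r ^ 9 - 2112 * r ^ 11) * X ^ 9
  + C (-1536 * r ^ 10) * X ^ 10

lemma primitiveNumerator_identity (r c : ℝ) :
    2 * r * ((c * (primitiveNumerator r).eval c
          - (1 - c ^ 2) * (primitiveNumerator r).derivative.eval c) * (1 - 2 * r * c + r ^ 2)
        - 2 * 6 * r * (1 - c ^ 2) * (primitiveNumerator r).eval c)
      = 30720 * r ^ 12 * (1 - c ^ 2) ^ 6 - 3465 * (1 + r ^ 12) * (1 - 2 * r * c + r ^ 2) ^ 6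
        + 3465 * (1 + r ^ 2 + r ^ 4 + r ^ 6 + r ^ 8 + r ^ 10) * (1 - 2 * r * c + r ^ 2) ^ 7 := by
  simp only [primitiveNumerator, derivative_add, derivative_C, derivative_C_mul_X,
    derivative_C_mul_X_pow, eval_add, eval_mul, eval_C, eval_X, eval_pow]
  norm_num
  ring

noncomputable def sinPowTwelvePrimitive (r θ : ℝ) : ℝ :=
  sin θ * (primitiveNumerator r).eval (cos θ) / (1 - 2 * r * cos θ + r ^ 2) ^ 6
      / (15360 * r ^ 11)
    + 231 * (1 + r ^ 12) / (2048 * r ^ 12 * (1 - r ^ 2))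
      * (θ + 2 * arctan (r * sin θ / (1 - r * cos θ)))
    - 231 * (1 + r ^ 2 + r ^ 4 + r ^ 6 + r ^ 8 + r ^ 10) / (2048 * r ^ 12) * θ

lemma hasDerivAt_sinPowTwelvePrimitive {r : ℝ} (hr0 : r ≠ 0) (hr : |r| < 1) (θ : ℝ) :
    HasDerivAt (sinPowTwelvePrimitive r) (sin θ ^ 12 / (1 - 2 * r * cos θ + r ^ 2) ^ 7) θ := by
  have hD := one_sub_two_mul_mul_cos_add_sq_pos hr θ
  have hr2 : 1 - r ^ 2 ≠ 0 := by nlinarith [sq_abs r, abs_nonneg r]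
  refine ((((hasDerivAt_sin_mul_eval_cos_div_pow (primitiveNumerator r) r 6 hD.ne').div_const
    (15360 * r ^ 11)).add ((hasDerivAt_add_two_mul_arctan hr θ).const_mul _)).sub
    ((hasDerivAt_id θ).const_mul _)).congr_deriv ?_
  have key := primitiveNumerator_identity r (cos θ)
  rw [← sin_sq] at key
  push_cast
  generalize 1 - 2 * r * cos θ + r ^ 2 = D at hD key ⊢
  field_simp
  linear_combination 1024 * key

theorem integral_sin_pow_twelve_div {r : ℝ} (hr0 : r ≠ 0) (hr : |r| < 1) :
    ∫ θ in (0 : ℝ)..π, sin θ ^ 12 / (1 - 2 * r * cos θ + r ^ 2) ^ 7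
      = 231 * π / (1024 * (1 - r ^ 2)) := by
  have hr2 : 1 - r ^ 2 ≠ 0 := by nlinarith [sq_abs r, abs_nonneg r]
  have hcont : Continuous fun θ => sin θ ^ 12 / (1 - 2 * r * cos θ + r ^ 2) ^ 7 :=
    Continuous.div (by fun_prop) (by fun_prop)
      fun θ => (pow_pos (one_sub_two_mul_mul_cos_add_sq_pos hr θ) 7).ne'
  rw [intervalIntegral.integral_eq_sub_of_hasDerivAt
    (fun θ _ => hasDerivAt_sinPowTwelvePrimitive hr0 hr θ) (hcont.intervalIntegrable _ _)]
  simp only [sinPowTwelvePrimitive, sin_pi, cos_pi, sin_zero, cos_zero, mul_zero, zero_mul,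
    zero_div, arctan_zero, add_zero, sub_zero]
  field_simp
  ring

theorem stmt_18 (r : ℝ) (hr : r ∈ Set.Ioo (0:ℝ) 1) :
    (∫ ϑ in (0:ℝ)..Real.pi, Real.sin ϑ ^ 12 / (1 - 2 * r * Real.cos ϑ + r ^ 2) ^ 7)
      ≤ 231 * Real.pi / (1024 * (1 - r ^ 2)) :=
  (integral_sin_pow_twelve_div hr.1.ne' (abs_lt.mpr ⟨by linarith [hr.1], hr.2⟩)).le
end
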